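/- arXiv:2308.02735 — 2 statements merged into one kernel-verified Lean document; each statement's English description precedes it below -/
import Mathlib

section
/- Let v1 = [[1,0],[0,-1]], v2 = [[0,1],[1,0]], v3 = [[0,1],[-1,0]] and v4 = [[1/2, √3/2],[-i√3/2, i/2]] in M₂(ℂ). For each i ∈ {1,2,3}, if x ∈ M₂(ℂ) is a complex linear combination of the identity matrix and v_i, and x commutes with v4 (i.e. x v4 = v4 x), then x is a scalar multiple of the identity matrix. -/
open Complex

noncomputable def v₄ : Matrix (Fin 2) (Fin 2) ℂ :=
  !![1 / 2, ((Real.sqrt 3 : ℝ) : ℂ) / 2;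
     -I * ((Real.sqrt 3 : ℝ) : ℂ) / 2, I / 2]

/-- Scalars are central, so `a • 1 + b • v` commutes with `w` only through `b • [v, w] = 0`. -/
theorem Commute.eq_zero_of_smul_one_add_smul {K A : Type*} [Field K] [Ring A] [Algebra K A]
    {a b : K} {v w : A} (h : Commute (a • (1 : A) + b • v) w) (hvw : ¬Commute v w) :
    b = 0 := by
  have hbv : Commute (b • v) w := by
    simpa using h.sub_left ((Commute.one_left w).smul_left a)
  have hcomm : b • (v * w - w * v) = 0 := by
    rw [smul_sub, ← smul_mul_assoc, ← mul_smul_comm, hbv.eq, sub_self]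
  exact (smul_eq_zero.mp hcomm).resolve_right (sub_ne_zero.mpr hvw)

theorem not_commute_v₄ (k : Fin 3) :
    ¬Commute (![!![1, 0; 0, -1], !![0, 1; 1, 0], !![0, 1; -1, 0]] k) v₄ := by
  intro h
  -- The `(0, 1)` entries of the two products already differ: `√3 = -√3` for `v₁`, `i = 1` otherwise.
  have h01 := congrFun (congrFun h.eq 0) 1
  fin_cases k <;> simp [v₄, Matrix.mul_apply, Fin.sum_univ_two] at h01
  · have : (√3 : ℂ) = 0 := by linear_combination h01
    norm_num at this
  all_goals
    have hI : I = 1 := by linear_combination 2 * h01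
    simp [Complex.ext_iff] at hI

theorem stmt2 (k : Fin 3) (x : Matrix (Fin 2) (Fin 2) ℂ)
    (hx : ∃ a b : ℂ,
      x = a • (1 : Matrix (Fin 2) (Fin 2) ℂ) +
          b • (![!![1, 0; 0, -1], !![0, 1; 1, 0], !![0, 1; -1, 0]] k))
    (hcomm : x * v₄ = v₄ * x) :
    ∃ c : ℂ, x = c • (1 : Matrix (Fin 2) (Fin 2) ℂ) := by
  obtain ⟨a, b, rfl⟩ := hx
  have hb : b = 0 := Commute.eq_zero_of_smul_one_add_smul hcomm (not_commute_v₄ k)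
  exact ⟨a, by simp [hb]⟩
end

section
/- Let F be the free group on four generators g₁, g₂, g₃, g₄, and let f : G → ℂ be square-summable (∑_{s∈F} |f(s)|² < ∞). Assume that for all s ∈ F and all n ∈ ℤ one has |f(g₁ⁿ s g₁⁻ⁿ)| = |f(s)| and |f(g₂²ⁿ s g₂⁻²ⁿ)| = |f(s)|. Then f(s) = 0 for every s ≠ 1. -/
/-!
If `f` is square-summable, `‖f‖` cannot be constant and nonzero on an infinite set, so `f`
vanishes at every `s` whose conjugation orbit under `⟨g⟩` is infinite and along which `‖f‖` is
invariant. In a free group the centralizer of a nontrivial power of a generator `a` is `⟨a⟩`: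
peeling trailing letters `a^{±1}` off the reduced word of `s`, what remains is a word `w` whose
last letter is not `a^{±1}`, and then `w a^n w⁻¹` is already reduced, so it can only equal `a^n`
when `w` is empty. Hence elements outside `⟨g₁⟩` have infinite orbit under `⟨g₁⟩`, and nontrivial
powers of `g₁` have infinite orbit under `⟨g₂²⟩`.
-/

open Function

theorem Summable.eq_zero_of_injective_of_forall_eq {ι κ E : Type*} [Infinite κ] [AddCommGroup E]
    [TopologicalSpace E] [IsTopologicalAddGroup E] [T1Space E] {u : ι → E} (hu : Summable u)
    {e : κ → ι} (he : Injective e) {c : E} (hc : ∀ k, u (e k) = c) : c = 0 := by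
  have h := hu.tendsto_cofinite_zero.comp he.tendsto_cofinite
  rw [show u ∘ e = fun _ => c from funext hc] at h
  exact tendsto_const_nhds_iff.mp h

theorem injective_zpow_mul_mul_zpow_neg {G : Type*} [Group G] {g s : G}
    (h : ∀ n : ℤ, n ≠ 0 → ¬Commute (g ^ n) s) : Injective fun n : ℤ => g ^ n * s * g ^ (-n) := by
  intro m n (hmn : g ^ m * s * g ^ (-m) = g ^ n * s * g ^ (-n))
  by_contra hne
  refine h (m - n) (sub_ne_zero.mpr hne) ?_
  calc g ^ (m - n) * s = g ^ (-n) * (g ^ m * s * g ^ (-m)) * g ^ m := by group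
    _ = g ^ (-n) * (g ^ n * s * g ^ (-n)) * g ^ m := by rw [hmn]
    _ = s * g ^ (m - n) := by group

theorem eq_zero_of_summable_sq_of_norm_conj_eq {G E : Type*} [Group G] [NormedAddCommGroup E]
    {f : G → E} (hf : Summable fun s => ‖f s‖ ^ 2) {g s : G}
    (hgs : ∀ n : ℤ, n ≠ 0 → ¬Commute (g ^ n) s)
    (hconj : ∀ n : ℤ, ‖f (g ^ n * s * g ^ (-n))‖ = ‖f s‖) : f s = 0 := by
  have h := hf.eq_zero_of_injective_of_forall_eq (injective_zpow_mul_mul_zpow_neg hgs)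
    fun n => congrArg (· ^ 2) (hconj n)
  exact norm_eq_zero.mp (pow_eq_zero_iff two_ne_zero |>.mp h)

namespace FreeGroup

variable {α : Type*}

theorem IsReduced.append_replicate {L : List (α × Bool)} (hL : IsReduced L) {a : α}
    (ha : ∀ x ∈ L.getLast?, x.1 ≠ a) (n : ℕ) (b : Bool) :
    IsReduced (L ++ List.replicate n (a, b)) := by
  refine List.isChain_append.mpr ⟨hL, List.isChain_replicate_of_rel n fun _ => rfl, ?_⟩
  intro x hx y hy hxy
  rw [List.eq_of_mem_replicate (List.mem_of_mem_head? hy)] at hxy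
  exact absurd hxy (ha x hx)

theorem mk_singleton_mem_zpowers (a : α) (b : Bool) : mk [(a, b)] ∈ Subgroup.zpowers (of a) := by
  cases b
  · have h : mk [(a, false)] = (of a)⁻¹ := by simp [of, inv_mk, FreeGroup.invRev]
    exact h ▸ Subgroup.inv_mem _ (Subgroup.mem_zpowers _)
  · exact Subgroup.mem_zpowers _

variable [DecidableEq α]

theorem IsReduced.invRev {L : List (α × Bool)} (h : IsReduced L) : IsReduced (invRev L) := by
  rw [isReduced_iff_reduce_eq, reduce_invRev, h.reduce_eq]

theorem toWord_mul_of_pow_mul_inv {s : FreeGroup α} {a : α}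
    (ha : ∀ x ∈ s.toWord.getLast?, x.1 ≠ a) {n : ℕ} (hn : n ≠ 0) :
    (s * of a ^ n * s⁻¹).toWord = s.toWord ++ List.replicate n (a, true) ++ invRev s.toWord := by
  have hleft : IsReduced (s.toWord ++ List.replicate n (a, true)) :=
    isReduced_toWord.append_replicate ha n true
  have hright : IsReduced (List.replicate n (a, true) ++ invRev s.toWord) := by
    simpa [FreeGroup.invRev] using (isReduced_toWord.append_replicate ha n false).invRev
  rw [toWord_mul, toWord_mul, toWord_of_pow, toWord_inv, hleft.reduce_eq]
  exact (hleft.append_overlap hright (by simpa using hn)).reduce_eq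

theorem eq_one_of_commute_of_getLast_ne {s : FreeGroup α} {a : α}
    (ha : ∀ x ∈ s.toWord.getLast?, x.1 ≠ a) {n : ℤ} (hn : n ≠ 0) (h : Commute (of a ^ n) s) :
    s = 1 := by
  have hnat : Commute (of a ^ n.natAbs) s := by
    rcases Int.natAbs_eq n with hn' | hn'
    · rwa [hn', zpow_natCast] at h
    · rw [hn', zpow_neg, zpow_natCast] at h
      exact Commute.inv_left_iff.mp h
  have hconj : s * of a ^ n.natAbs * s⁻¹ = of a ^ n.natAbs := by
    rw [← hnat.eq, mul_inv_cancel_right]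
  have hlen := congrArg List.length (toWord_mul_of_pow_mul_inv ha (Int.natAbs_ne_zero.mpr hn))
  rw [hconj, toWord_of_pow] at hlen
  simp only [List.length_append, List.length_replicate, invRev_length] at hlen
  exact toWord_eq_nil_iff.mp (List.length_eq_zero_iff.mp (by omega))

theorem mem_zpowers_of_commute_zpow {a : α} {n : ℤ} (hn : n ≠ 0) {s : FreeGroup α}
    (h : Commute (of a ^ n) s) : s ∈ Subgroup.zpowers (of a) := by
  suffices key : ∀ L, IsReduced L → Commute (of a ^ n) (mk L) → mk L ∈ Subgroup.zpowers (of a) by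
    rw [← mk_toWord (x := s)] at h ⊢
    exact key _ isReduced_toWord h
  intro L
  induction L using List.reverseRecOn with
  | nil => exact fun _ _ => Subgroup.one_mem _
  | append_singleton L x ih =>
    intro hred hc
    obtain ⟨c, b⟩ := x
    by_cases hca : c = a
    · subst hca
      obtain ⟨k, hk⟩ := mk_singleton_mem_zpowers c b
      have hcx : Commute (of c ^ n) (mk [(c, b)]) := hk ▸ Commute.zpow_zpow_self _ n k
      rw [← mul_mk] at hc ⊢
      have hL : Commute (of c ^ n) (mk L) := by
        simpa only [mul_inv_cancel_right] using hc.mul_right hcx.inv_right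
      exact Subgroup.mul_mem _ (ih (hred.infix ⟨[], [(c, b)], by simp⟩) hL) ⟨k, hk⟩
    · have hw : (mk (L ++ [(c, b)])).toWord = L ++ [(c, b)] := by rw [toWord_mk, hred.reduce_eq]
      have ha : ∀ x ∈ (mk (L ++ [(c, b)])).toWord.getLast?, x.1 ≠ a := by
        simpa [hw] using hca
      rw [eq_one_of_commute_of_getLast_ne ha hn hc]
      exact Subgroup.one_mem _

theorem of_zpow_ne_of_zpow {a b : α} (hab : a ≠ b) {k : ℤ} (hk : k ≠ 0) (l : ℤ) :
    of a ^ k ≠ of b ^ l := by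
  intro h
  have h' := congrArg (lift (Pi.mulSingle a (Multiplicative.ofAdd (1 : ℤ)))) h
  exact hk (by simpa [Pi.mulSingle_eq_of_ne' hab] using h')

end FreeGroup

open FreeGroup in
theorem stmt8 (f : FreeGroup (Fin 4) → ℂ)
    (hf : Summable fun s : FreeGroup (Fin 4) => ‖f s‖ ^ 2)
    (h1 : ∀ (s : FreeGroup (Fin 4)) (n : ℤ),
      ‖f (FreeGroup.of 0 ^ n * s * FreeGroup.of 0 ^ (-n))‖ = ‖f s‖)
    (h2 : ∀ (s : FreeGroup (Fin 4)) (n : ℤ),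
      ‖f (FreeGroup.of 1 ^ (2 * n) * s * FreeGroup.of 1 ^ (-(2 * n)))‖ = ‖f s‖)
    (s : FreeGroup (Fin 4)) (hs : s ≠ 1) : f s = 0 := by
  by_cases hs0 : s ∈ Subgroup.zpowers (of 0)
  · obtain ⟨k, rfl⟩ := hs0
    have hk : k ≠ 0 := by rintro rfl; exact hs (zpow_zero _)
    refine eq_zero_of_summable_sq_of_norm_conj_eq hf (g := of 1 ^ (2 : ℤ)) (fun n hn hc => ?_)
      fun n => ?_
    · rw [← zpow_mul] at hc
      obtain ⟨l, hl⟩ := mem_zpowers_of_commute_zpow (mul_ne_zero two_ne_zero hn) hc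
      exact of_zpow_ne_of_zpow (by decide) hk l hl.symm
    · simpa only [← zpow_mul, mul_neg] using h2 (of 0 ^ k) n
  · exact eq_zero_of_summable_sq_of_norm_conj_eq hf
      (fun n hn hc => hs0 (mem_zpowers_of_commute_zpow hn hc)) (h1 s)
end
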